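/- Let γ > 2, d ≥ 1, and K(t,t) as above. Then ∫_{ℝ^d} tr(K(t,t)) · exp(−γ‖t‖²) dt = (π/(γ−2))^{d/2} · ( d + d/(2(γ−2)) ) − ( d(d+1)/(2(γ−1)) + d ) · (π/(γ−1))^{d/2}. -/

import Mathlib

/-!
Since `tr K(t,t) = e^{2‖t‖²}(‖t‖² + d) - e^{‖t‖²}((d+1)‖t‖² + d)`, the integrand is a difference
of two terms `(a‖t‖² + c) e^{-b‖t‖²}` with `b = γ - 2` and `b = γ - 1`. In polar coordinates on
an `n`-dimensional space the second moment of a Gaussian is a ratio of Gamma values,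
`Γ(n/2 + 1) / Γ(n/2) = n/2`, so that `∫ ‖x‖² e^{-b‖x‖²} = n/(2b) ∫ e^{-b‖x‖²}`, and the latter
integral is `(π/b)^{n/2}`.
-/

open scoped RealInnerProductSpace

/-- The covariance matrix kernel `K(s,t)` of the limiting Gaussian process. -/
noncomputable def covKernel {d : ℕ} (s t : EuclideanSpace ℝ (Fin d)) :
    Matrix (Fin d) (Fin d) ℝ :=
  Real.exp ((‖s‖ ^ 2 + ‖t‖ ^ 2) / 2) •
    (Real.exp ⟪s, t⟫ • (Matrix.vecMulVec t s + 1) - Matrix.vecMulVec t s -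
      (1 + ⟪s, t⟫) • (1 : Matrix (Fin d) (Fin d) ℝ))

open MeasureTheory Real Set Module

lemma integral_Ioi_pow_mul_exp_neg_mul_sq {b : ℝ} (hb : 0 < b) (n : ℕ) :
    ∫ y in Ioi (0 : ℝ), y ^ n * exp (-b * y ^ 2) =
      b ^ (-((n : ℝ) + 1) / 2) * (1 / 2) * Gamma (((n : ℝ) + 1) / 2) := by
  rw [← integral_rpow_mul_exp_neg_mul_rpow two_pos (by linarith [n.cast_nonneg (α := ℝ)]) hb]
  refine setIntegral_congr_fun measurableSet_Ioi fun y _ => ?_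
  simp only [rpow_natCast, rpow_two]

lemma integral_Ioi_pow_mul_sq_mul_exp_neg_mul_sq {b : ℝ} (hb : 0 < b) (n : ℕ) :
    ∫ y in Ioi (0 : ℝ), y ^ n * (y ^ 2 * exp (-b * y ^ 2)) =
      (n + 1) / (2 * b) * ∫ y in Ioi (0 : ℝ), y ^ n * exp (-b * y ^ 2) := by
  have h := integral_Ioi_pow_mul_exp_neg_mul_sq hb (n + 2)
  simp only [← mul_assoc, ← pow_add, h, integral_Ioi_pow_mul_exp_neg_mul_sq hb n]
  have hΓ : Gamma ((((n + 2 : ℕ) : ℝ) + 1) / 2) = ((n + 1) / 2) * Gamma (((n : ℝ) + 1) / 2) := by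
    rw [← Gamma_add_one (by positivity)]
    push_cast; ring_nf
  have hb' : b ^ (-(((n + 2 : ℕ) : ℝ) + 1) / 2) = b⁻¹ * b ^ (-((n : ℝ) + 1) / 2) := by
    rw [← rpow_neg_one, ← rpow_add hb]
    push_cast; ring_nf
  rw [hΓ, hb']
  field_simp

lemma integral_sq_norm_mul_exp_neg_mul_sq_norm {E : Type*} [NormedAddCommGroup E]
    [NormedSpace ℝ E] [FiniteDimensional ℝ E] [MeasurableSpace E] [BorelSpace E]
    (μ : Measure E) [μ.IsAddHaarMeasure] {b : ℝ} (hb : 0 < b) :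
    ∫ x, ‖x‖ ^ 2 * exp (-b * ‖x‖ ^ 2) ∂μ =
      finrank ℝ E / (2 * b) * ∫ x, exp (-b * ‖x‖ ^ 2) ∂μ := by
  rcases subsingleton_or_nontrivial E with hE | hE
  · simp [finrank_zero_of_subsingleton, Subsingleton.elim _ (0 : E)]
  have hdim : ((finrank ℝ E - 1 : ℕ) : ℝ) + 1 = finrank ℝ E := by
    rw [Nat.cast_sub finrank_pos, Nat.cast_one, sub_add_cancel]
  rw [integral_fun_norm_addHaar μ fun y => y ^ 2 * exp (-b * y ^ 2),
    integral_fun_norm_addHaar μ fun y => exp (-b * y ^ 2)]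
  simp only [smul_eq_mul, nsmul_eq_mul, integral_Ioi_pow_mul_sq_mul_exp_neg_mul_sq hb, hdim]
  ring

section InnerProductSpace

variable {V : Type*} [NormedAddCommGroup V] [InnerProductSpace ℝ V] [FiniteDimensional ℝ V]
  [MeasurableSpace V] [BorelSpace V] {b : ℝ}

lemma integrable_exp_neg_mul_sq_norm (hb : 0 < b) :
    Integrable fun v : V => exp (-b * ‖v‖ ^ 2) :=
  .of_integral_ne_zero <| by
    rw [GaussianFourier.integral_rexp_neg_mul_sq_norm hb]
    positivity

lemma integrable_sq_norm_mul_exp_neg_mul_sq_norm (hb : 0 < b) :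
    Integrable fun v : V => ‖v‖ ^ 2 * exp (-b * ‖v‖ ^ 2) := by
  rcases subsingleton_or_nontrivial V with hV | hV
  · simp [Subsingleton.elim _ (0 : V)]
  refine .of_integral_ne_zero ?_
  rw [integral_sq_norm_mul_exp_neg_mul_sq_norm volume hb,
    GaussianFourier.integral_rexp_neg_mul_sq_norm hb]
  have := finrank_pos (R := ℝ) (M := V)
  positivity

lemma integrable_mul_sq_norm_add_mul_exp_neg_mul_sq_norm (hb : 0 < b) (a c : ℝ) :
    Integrable fun v : V => (a * ‖v‖ ^ 2 + c) * exp (-b * ‖v‖ ^ 2) :=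
  (((integrable_sq_norm_mul_exp_neg_mul_sq_norm hb).const_mul a).add
    ((integrable_exp_neg_mul_sq_norm hb).const_mul c)).congr <|
      .of_forall fun v => by simp only [Pi.add_apply]; ring

lemma integral_mul_sq_norm_add_mul_exp_neg_mul_sq_norm (hb : 0 < b) (a c : ℝ) :
    ∫ v : V, (a * ‖v‖ ^ 2 + c) * exp (-b * ‖v‖ ^ 2) =
      (a * finrank ℝ V / (2 * b) + c) * (π / b) ^ (finrank ℝ V / 2 : ℝ) := by
  simp only [add_mul, mul_assoc]
  rw [integral_add ((integrable_sq_norm_mul_exp_neg_mul_sq_norm hb).const_mul a)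
      ((integrable_exp_neg_mul_sq_norm hb).const_mul c),
    integral_const_mul, integral_const_mul, integral_sq_norm_mul_exp_neg_mul_sq_norm volume hb,
    GaussianFourier.integral_rexp_neg_mul_sq_norm hb]
  ring

end InnerProductSpace

lemma trace_vecMulVec_self {d : ℕ} (t : EuclideanSpace ℝ (Fin d)) :
    (Matrix.vecMulVec t t).trace = ‖t‖ ^ 2 := by
  rw [← real_inner_self_eq_norm_sq, PiLp.inner_apply]
  simp [Matrix.trace, Matrix.vecMulVec_apply, sq]

lemma trace_covKernel_self {d : ℕ} (t : EuclideanSpace ℝ (Fin d)) :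
    (covKernel t t).trace =
      exp (‖t‖ ^ 2) * (exp (‖t‖ ^ 2) * (‖t‖ ^ 2 + d) - ‖t‖ ^ 2 - (1 + ‖t‖ ^ 2) * d) := by
  simp only [covKernel, real_inner_self_eq_norm_sq, Matrix.trace_smul, Matrix.trace_sub,
    Matrix.trace_add, Matrix.trace_one, trace_vecMulVec_self, smul_eq_mul, Fintype.card_fin,
    add_self_div_two]

theorem stmt_13_general (d : ℕ) (γ : ℝ) (hγ : 2 < γ) :
    ∫ t : EuclideanSpace ℝ (Fin d),
        Matrix.trace (covKernel t t) * Real.exp (-γ * ‖t‖ ^ 2) =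
      (Real.pi / (γ - 2)) ^ ((d : ℝ) / 2) * ((d : ℝ) + d / (2 * (γ - 2))) -
        ((d : ℝ) * (d + 1) / (2 * (γ - 1)) + d) * (Real.pi / (γ - 1)) ^ ((d : ℝ) / 2) := by
  have hsplit : ∀ t : EuclideanSpace ℝ (Fin d),
      (covKernel t t).trace * exp (-γ * ‖t‖ ^ 2) =
        (1 * ‖t‖ ^ 2 + d) * exp (-(γ - 2) * ‖t‖ ^ 2) -
          ((d + 1) * ‖t‖ ^ 2 + d) * exp (-(γ - 1) * ‖t‖ ^ 2) := by
    intro t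
    rw [trace_covKernel_self, show -(γ - 2) * ‖t‖ ^ 2 = ‖t‖ ^ 2 + ‖t‖ ^ 2 + -γ * ‖t‖ ^ 2 by ring,
      show -(γ - 1) * ‖t‖ ^ 2 = ‖t‖ ^ 2 + -γ * ‖t‖ ^ 2 by ring, exp_add, exp_add, exp_add]
    ring
  have h2 : 0 < γ - 2 := by linarith
  have h1 : 0 < γ - 1 := by linarith
  simp only [hsplit]
  rw [integral_sub (integrable_mul_sq_norm_add_mul_exp_neg_mul_sq_norm h2 _ _)
      (integrable_mul_sq_norm_add_mul_exp_neg_mul_sq_norm h1 _ _),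
    integral_mul_sq_norm_add_mul_exp_neg_mul_sq_norm h2,
    integral_mul_sq_norm_add_mul_exp_neg_mul_sq_norm h1, finrank_euclideanSpace_fin]
  ring

theorem stmt_13 (d : ℕ) (hd : 1 ≤ d) (γ : ℝ) (hγ : 2 < γ) :
    ∫ t : EuclideanSpace ℝ (Fin d),
        Matrix.trace (covKernel t t) * Real.exp (-γ * ‖t‖ ^ 2) =
      (Real.pi / (γ - 2)) ^ ((d : ℝ) / 2) * ((d : ℝ) + d / (2 * (γ - 2))) -
        ((d : ℝ) * (d + 1) / (2 * (γ - 1)) + d) * (Real.pi / (γ - 1)) ^ ((d : ℝ) / 2) :=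
  stmt_13_general d γ hγ
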